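/- arXiv:1803.09452 — 2 statements merged into one kernel-verified Lean document; each statement's English description precedes it below -/
import Mathlib

section
/- Let F : ℝ → ℝ be three times differentiable with |F''(a)| ≤ M₂ and |F'''(a)| ≤ M₃ for all a ∈ ℝ, and let z be a random variable with the normal distribution N(0, σ²), σ > 0. Then for every a ∈ ℝ, |E[F(a − z)] − F(a)| ≤ (M₂/2)σ² + (M₃/6)·E|z|³, and since E|z|³ = 2√(2/π)·σ³, it follows that sup_{a∈ℝ} |E[F(a − z)] − F(a)| ≤ (M₂/2)σ² + (√(2/π)·M₃/3)·σ³. -/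
open MeasureTheory ProbabilityTheory Real
open scoped NNReal ENNReal

noncomputable section

section Aux

lemma aux_gauss_transfer (v : ℝ≥0) (hv : v ≠ 0) (g : ℝ → ℝ) :
    ∫ z, g z ∂(gaussianReal 0 v) = ∫ x, gaussianPDFReal 0 v x * g x := by
  rw [gaussianReal_of_var_ne_zero _ hv]
  have h1 : gaussianPDF 0 v = fun x => ((gaussianPDFReal 0 v x).toNNReal : ℝ≥0∞) := rfl
  have hm : Measurable fun x => (gaussianPDFReal 0 v x).toNNReal :=
    measurable_real_toNNReal.comp (measurable_gaussianPDFReal 0 v)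
  rw [h1, integral_withDensity_eq_integral_smul hm]
  congr 1; ext x
  rw [NNReal.smul_def, smul_eq_mul, Real.coe_toNNReal _ (gaussianPDFReal_nonneg 0 v x)]

lemma aux_gauss_integrable_iff (v : ℝ≥0) (hv : v ≠ 0) (g : ℝ → ℝ) :
    Integrable g (gaussianReal 0 v) ↔
      Integrable (fun x => gaussianPDFReal 0 v x * g x) volume := by
  rw [gaussianReal_of_var_ne_zero _ hv]
  have h1 : gaussianPDF 0 v = fun x => ((gaussianPDFReal 0 v x).toNNReal : ℝ≥0∞) := rfl
  have hm : Measurable fun x => (gaussianPDFReal 0 v x).toNNReal :=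
    measurable_real_toNNReal.comp (measurable_gaussianPDFReal 0 v)
  rw [h1, integrable_withDensity_iff_integrable_smul hm]
  constructor <;> intro h <;> refine h.congr (ae_of_all _ fun x => ?_) <;>
    simp only [NNReal.smul_def, smul_eq_mul,
      Real.coe_toNNReal _ (gaussianPDFReal_nonneg 0 v x)]

lemma aux_int_pow_gauss {b : ℝ} (hb : 0 < b) (n : ℕ) :
    Integrable (fun x : ℝ => x ^ n * rexp (-b * x ^ 2)) := by
  have := integrable_rpow_mul_exp_neg_mul_sq hb (s := (n : ℝ))
    (by exact_mod_cast neg_one_lt_zero.trans_le n.cast_nonneg)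
  refine this.congr (ae_of_all _ fun x => ?_)
  simp [Real.rpow_natCast]

lemma aux_int_abs_pow_gauss {b : ℝ} (hb : 0 < b) (n : ℕ) :
    Integrable (fun x : ℝ => |x| ^ n * rexp (-b * x ^ 2)) := by
  refine (aux_int_pow_gauss hb n).abs.congr (ae_of_all _ fun x => ?_)
  simp [abs_mul, abs_pow, abs_of_nonneg (exp_nonneg _)]

lemma aux_moment1_gauss {b : ℝ} (hb : 0 < b) :
    ∫ x : ℝ, x * rexp (-b * x ^ 2) = 0 := by
  have hmp : MeasurePreserving (fun x : ℝ => -x) volume volume :=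
    Measure.measurePreserving_neg _
  have h := hmp.integral_comp (Homeomorph.neg ℝ).measurableEmbedding
    (fun x : ℝ => x * rexp (-b * x ^ 2))
  simp only [neg_sq, neg_mul] at h
  have h2 : (∫ x : ℝ, -(x * rexp (-(b * x ^ 2)))) = ∫ x : ℝ, x * rexp (-(b * x ^ 2)) := h
  rw [integral_neg] at h2
  have h3 : (∫ x : ℝ, x * rexp (-(b * x ^ 2))) = 0 := by linarith
  simpa [neg_mul] using h3

lemma aux_ioi_pow_gauss {b : ℝ} (hb : 0 < b) (n : ℕ) :
    ∫ x in Set.Ioi (0:ℝ), x ^ n * rexp (-b * x ^ 2)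
      = b ^ (-((n:ℝ) + 1) / 2) * (1 / 2) * Real.Gamma (((n:ℝ) + 1) / 2) := by
  rw [← integral_rpow_mul_exp_neg_mul_rpow two_pos
    (by exact_mod_cast neg_one_lt_zero.trans_le n.cast_nonneg : (-1:ℝ) < (n:ℝ)) hb]
  refine setIntegral_congr_fun measurableSet_Ioi (fun x hx => ?_)
  rw [Real.rpow_natCast, Real.rpow_two]

lemma aux_moment2_gauss {b : ℝ} (hb : 0 < b) :
    ∫ x : ℝ, x ^ 2 * rexp (-b * x ^ 2) = b ^ (-(3:ℝ)/2) * (Real.sqrt π / 2) := by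
  have h := integral_comp_abs (f := fun t : ℝ => t ^ 2 * rexp (-b * t ^ 2))
  simp only [sq_abs] at h
  rw [h, aux_ioi_pow_gauss hb 2]
  have hg32 : Real.Gamma (3/2 : ℝ) = Real.sqrt π / 2 := by
    have : (3/2 : ℝ) = 1/2 + 1 := by norm_num
    rw [this, Real.Gamma_add_one (by norm_num), Real.Gamma_one_half_eq]
    ring
  norm_num
  rw [hg32]
  ring

lemma aux_moment3_gauss {b : ℝ} (hb : 0 < b) :
    ∫ x : ℝ, |x| ^ 3 * rexp (-b * x ^ 2) = (b ^ 2)⁻¹ := by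
  have h := integral_comp_abs (f := fun t : ℝ => t ^ 3 * rexp (-b * t ^ 2))
  simp only [sq_abs] at h
  rw [h, aux_ioi_pow_gauss hb 3]
  have hg : Real.Gamma ((((3:ℕ):ℝ) + 1) / 2) = 1 := by norm_num
  norm_num [hg]
  ring

lemma aux_pdf_form (v : ℝ≥0) (x : ℝ) :
    gaussianPDFReal 0 v x = (Real.sqrt (2*π*v))⁻¹ * rexp (-(2*(v:ℝ))⁻¹ * x^2) := by
  rw [gaussianPDFReal]
  congr 1
  rw [sub_zero, neg_div, div_eq_mul_inv, mul_comm, neg_mul]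

variable {v : ℝ≥0}

lemma aux_hb_pos (hv : 0 < (v:ℝ)) : 0 < (2*(v:ℝ))⁻¹ := by positivity

lemma aux_twov_rpow (hv : 0 < (v:ℝ)) :
    ((2*(v:ℝ))⁻¹) ^ (-(3:ℝ)/2) = 2*(v:ℝ) * Real.sqrt (2*(v:ℝ)) := by
  have h2v : (0:ℝ) < 2*(v:ℝ) := by positivity
  rw [Real.inv_rpow h2v.le, ← Real.rpow_neg h2v.le, neg_div, neg_neg]
  rw [show (3:ℝ)/2 = 1 + 1/2 by norm_num, Real.rpow_add h2v, Real.rpow_one,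
    ← Real.sqrt_eq_rpow]

lemma aux_sqrt2piv (hv : 0 < (v:ℝ)) :
    Real.sqrt (2*π*(v:ℝ)) = Real.sqrt (2*(v:ℝ)) * Real.sqrt π := by
  rw [← Real.sqrt_mul (by positivity)]
  ring_nf

lemma aux_gauss_moment2_vol (hv : 0 < (v:ℝ)) :
    ∫ x : ℝ, gaussianPDFReal 0 v x * x ^ 2 = (v:ℝ) := by
  have hb := aux_hb_pos hv
  have h1 : ∀ x : ℝ, gaussianPDFReal 0 v x * x ^ 2
      = (Real.sqrt (2*π*v))⁻¹ * (x ^ 2 * rexp (-(2*(v:ℝ))⁻¹ * x^2)) := by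
    intro x; rw [aux_pdf_form]; ring
  simp_rw [h1]
  rw [integral_const_mul, aux_moment2_gauss hb, aux_twov_rpow hv, aux_sqrt2piv hv]
  have hs : Real.sqrt (2*(v:ℝ)) > 0 := Real.sqrt_pos.mpr (by positivity)
  have ht : Real.sqrt π > 0 := Real.sqrt_pos.mpr pi_pos
  have hs2 : Real.sqrt (2*(v:ℝ)) ^ 2 = 2*(v:ℝ) := Real.sq_sqrt (by positivity)
  field_simp

lemma aux_gauss_moment1_vol (hv : 0 < (v:ℝ)) :
    ∫ x : ℝ, gaussianPDFReal 0 v x * x = 0 := by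
  have hb := aux_hb_pos hv
  have h1 : ∀ x : ℝ, gaussianPDFReal 0 v x * x
      = (Real.sqrt (2*π*v))⁻¹ * (x * rexp (-(2*(v:ℝ))⁻¹ * x^2)) := by
    intro x; rw [aux_pdf_form]; ring
  simp_rw [h1]
  rw [integral_const_mul, aux_moment1_gauss hb, mul_zero]

lemma aux_gauss_moment3_vol {σ : ℝ} (hσ : 0 < σ) (hvσ : (v:ℝ) = σ^2) :
    ∫ x : ℝ, gaussianPDFReal 0 v x * |x| ^ 3 = 2 * Real.sqrt (2/π) * σ^3 := by
  have hv : 0 < (v:ℝ) := by rw [hvσ]; positivity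
  have hb := aux_hb_pos hv
  have h1 : ∀ x : ℝ, gaussianPDFReal 0 v x * |x| ^ 3
      = (Real.sqrt (2*π*v))⁻¹ * (|x| ^ 3 * rexp (-(2*(v:ℝ))⁻¹ * x^2)) := by
    intro x; rw [aux_pdf_form]; ring
  simp_rw [h1]
  rw [integral_const_mul, aux_moment3_gauss hb, aux_sqrt2piv hv]
  have hs2 : Real.sqrt (2:ℝ) > 0 := Real.sqrt_pos.mpr (by norm_num)
  have ht : Real.sqrt π > 0 := Real.sqrt_pos.mpr pi_pos
  have hsv : Real.sqrt (2*(v:ℝ)) = Real.sqrt 2 * σ := by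
    rw [hvσ, Real.sqrt_mul (by norm_num), Real.sqrt_sq hσ.le]
  have hdiv : Real.sqrt (2/π) = Real.sqrt 2 / Real.sqrt π :=
    Real.sqrt_div (by norm_num) π
  rw [hsv, hdiv, hvσ]
  have h22 : Real.sqrt (2:ℝ) ^ 2 = 2 := Real.sq_sqrt (by norm_num)
  field_simp
  linear_combination (-1) * h22

lemma aux_taylor2_bound (F : ℝ → ℝ) (M₂ : ℝ)
    (hd1 : Differentiable ℝ F) (hd2 : Differentiable ℝ (deriv F))
    (hb2 : ∀ a : ℝ, |deriv (deriv F) a| ≤ M₂) (a x : ℝ) :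
    |F x - F a - deriv F a * (x - a)| ≤ M₂ / 2 * (x - a)^2 := by
  have hc1 : Continuous (deriv F) := hd2.continuous
  have hlip : ∀ t : ℝ, |deriv F t - deriv F a| ≤ M₂ * |t - a| := by
    intro t
    have := Convex.norm_image_sub_le_of_norm_deriv_le (f := deriv F) (s := Set.univ)
      (fun y _ => hd2 y) (fun y _ => hb2 y) convex_univ (Set.mem_univ a) (Set.mem_univ t)
    simpa [Real.norm_eq_abs] using this
  have heq : F x - F a - deriv F a * (x - a)
      = ∫ t in a..x, (deriv F t - deriv F a) := by
    rw [intervalIntegral.integral_sub (hc1.intervalIntegrable a x)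
      (intervalIntegrable_const), intervalIntegral.integral_deriv_eq_sub
      (fun y _ => hd1 y) (hc1.intervalIntegrable a x), intervalIntegral.integral_const,
      smul_eq_mul]
    ring
  rw [heq]
  have habs : |∫ t in a..x, (deriv F t - deriv F a)|
      ≤ abs (∫ t in a..x, |deriv F t - deriv F a|) := by
    simpa [Real.norm_eq_abs] using
      intervalIntegral.norm_integral_le_abs_integral_norm
        (f := fun t => deriv F t - deriv F a) (a := a) (b := x) (μ := volume)
  refine habs.trans ?_
  rcases le_total a x with hax | hax
  · have hmono : (∫ t in a..x, |deriv F t - deriv F a|) ≤ ∫ t in a..x, M₂ * (t - a) := by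
      refine intervalIntegral.integral_mono_on hax
        ((hc1.sub continuous_const).abs.intervalIntegrable a x)
        ((continuous_const.mul (continuous_id.sub continuous_const)).intervalIntegrable a x)
        (fun t ht => (hlip t).trans_eq ?_)
      rw [abs_of_nonneg (sub_nonneg.mpr ht.1)]
    have hval : (∫ t in a..x, M₂ * (t - a)) = M₂ / 2 * (x - a)^2 := by
      rw [intervalIntegral.integral_const_mul]
      rw [intervalIntegral.integral_comp_sub_right (fun t => t) a]
      rw [integral_id]
      ring
    have h0 : (0:ℝ) ≤ ∫ t in a..x, |deriv F t - deriv F a| := by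
      apply intervalIntegral.integral_nonneg hax
      intro t _; exact abs_nonneg _
    rw [abs_of_nonneg h0]
    exact hmono.trans hval.le
  · have hflip : (∫ t in a..x, |deriv F t - deriv F a|)
        = -∫ t in x..a, |deriv F t - deriv F a| := by
      rw [intervalIntegral.integral_symm]
    have hmono : (∫ t in x..a, |deriv F t - deriv F a|) ≤ ∫ t in x..a, M₂ * (a - t) := by
      refine intervalIntegral.integral_mono_on hax
        ((hc1.sub continuous_const).abs.intervalIntegrable x a)
        ((continuous_const.mul (continuous_const.sub continuous_id)).intervalIntegrable x a)
        (fun t ht => (hlip t).trans_eq ?_)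
      rw [abs_of_nonpos (sub_nonpos.mpr ht.2), neg_sub]
    have hval : (∫ t in x..a, M₂ * (a - t)) = M₂ / 2 * (x - a)^2 := by
      rw [intervalIntegral.integral_const_mul]
      rw [intervalIntegral.integral_comp_sub_left (fun t => t) a]
      rw [integral_id]
      ring
    have h0 : (0:ℝ) ≤ ∫ t in x..a, |deriv F t - deriv F a| := by
      apply intervalIntegral.integral_nonneg hax
      intro t _; exact abs_nonneg _
    rw [hflip, abs_neg, abs_of_nonneg h0]
    exact hmono.trans hval.le

lemma aux_gauss_integrable (hv : 0 < (v:ℝ)) {g : ℝ → ℝ} (hgc : Continuous g)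
    {A B : ℝ} (hA : 0 ≤ A) (hB : 0 ≤ B) (hle : ∀ x, |g x| ≤ A + B * |x|^3) :
    Integrable (fun x => gaussianPDFReal 0 v x * g x) volume := by
  have hb : (0:ℝ) < (2*(v:ℝ))⁻¹ := by positivity
  set c : ℝ := (Real.sqrt (2*π*v))⁻¹ with hc
  have hc0 : 0 ≤ c := by positivity
  have hD : Integrable (fun x : ℝ => c * A * rexp (-(2*(v:ℝ))⁻¹ * x^2)
      + c * B * (|x|^3 * rexp (-(2*(v:ℝ))⁻¹ * x^2))) volume :=
    ((integrable_exp_neg_mul_sq hb).const_mul (c * A)).add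
      ((aux_int_abs_pow_gauss hb 3).const_mul (c * B))
  refine hD.mono' ?_ (ae_of_all _ fun x => ?_)
  · exact ((measurable_gaussianPDFReal 0 v).mul hgc.measurable).aestronglyMeasurable
  · rw [Real.norm_eq_abs, aux_pdf_form, abs_mul, mul_comm c, abs_mul]
    have he : 0 < rexp (-(2*(v:ℝ))⁻¹ * x^2) := exp_pos _
    rw [abs_of_nonneg he.le, abs_of_nonneg hc0]
    calc rexp (-(2*(v:ℝ))⁻¹ * x^2) * c * |g x|
        ≤ rexp (-(2*(v:ℝ))⁻¹ * x^2) * c * (A + B * |x|^3) := by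
          apply mul_le_mul_of_nonneg_left (hle x) (by positivity)
      _ = c * A * rexp (-(2*(v:ℝ))⁻¹ * x^2)
          + c * B * (|x|^3 * rexp (-(2*(v:ℝ))⁻¹ * x^2)) := by ring

lemma aux_le_one_add_cube {t : ℝ} (ht : 0 ≤ t) : t ≤ 1 + t^3 := by
  rcases le_total t 1 with h | h
  · nlinarith [mul_nonneg (mul_nonneg ht ht) ht]
  · nlinarith [mul_nonneg ht (mul_self_nonneg (t - 1)), mul_nonneg (mul_nonneg ht ht) ht,
      mul_nonneg ht (sub_nonneg.mpr h)]

lemma aux_sq_le_one_add_cube {t : ℝ} (ht : 0 ≤ t) : t^2 ≤ 1 + t^3 := by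
  rcases le_total t 1 with h | h
  · nlinarith [mul_nonneg (mul_nonneg ht ht) ht, mul_nonneg ht ht]
  · nlinarith [mul_nonneg (mul_nonneg ht ht) (sub_nonneg.mpr h), mul_nonneg ht ht]

end Aux

/-- Gaussian smoothing bound: if `F` is three times differentiable with `|F''| ≤ M₂` and
`|F'''| ≤ M₃`, and `z ∼ N(0, σ²)`, then for every `a`,
`|E[F(a − z)] − F(a)| ≤ (M₂/2)σ² + (M₃/6)E|z|³`; and, since `E|z|³ = 2√(2/π)σ³`, also
`sup_a |E[F(a − z)] − F(a)| ≤ (M₂/2)σ² + (√(2/π)M₃/3)σ³`. -/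
theorem gaussian_smoothing_bound
    (F : ℝ → ℝ) (M₂ M₃ : ℝ)
    (hd1 : Differentiable ℝ F) (hd2 : Differentiable ℝ (deriv F))
    (hd3 : Differentiable ℝ (deriv (deriv F)))
    (hb2 : ∀ a : ℝ, |deriv (deriv F) a| ≤ M₂)
    (hb3 : ∀ a : ℝ, |deriv (deriv (deriv F)) a| ≤ M₃)
    (σ : ℝ) (hσ : 0 < σ) :
    (∀ a : ℝ,
      |(∫ z, F (a - z) ∂(gaussianReal 0 ⟨σ ^ 2, sq_nonneg σ⟩)) - F a|
        ≤ M₂ / 2 * σ ^ 2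
          + M₃ / 6 * ∫ z, |z| ^ 3 ∂(gaussianReal 0 ⟨σ ^ 2, sq_nonneg σ⟩)) ∧
    (∫ z, |z| ^ 3 ∂(gaussianReal 0 ⟨σ ^ 2, sq_nonneg σ⟩) = 2 * Real.sqrt (2 / π) * σ ^ 3) ∧
    (∀ a : ℝ,
      |(∫ z, F (a - z) ∂(gaussianReal 0 ⟨σ ^ 2, sq_nonneg σ⟩)) - F a|
        ≤ M₂ / 2 * σ ^ 2 + Real.sqrt (2 / π) * M₃ / 3 * σ ^ 3) := by
  set v : ℝ≥0 := ⟨σ ^ 2, sq_nonneg σ⟩ with hvdef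
  have hvr : (v:ℝ) = σ^2 := rfl
  have hvpos : 0 < (v:ℝ) := by rw [hvr]; positivity
  have hv : v ≠ 0 := by
    intro h
    rw [h, NNReal.coe_zero] at hvpos
    exact lt_irrefl 0 hvpos
  have hM2 : 0 ≤ M₂ := (abs_nonneg _).trans (hb2 0)
  have hM3 : 0 ≤ M₃ := (abs_nonneg _).trans (hb3 0)
  have Ez : ∫ z, (z:ℝ) ∂(gaussianReal 0 v) = 0 := by
    rw [aux_gauss_transfer v hv]; exact aux_gauss_moment1_vol hvpos
  have Ez2 : ∫ z, z^2 ∂(gaussianReal 0 v) = σ^2 := by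
    rw [aux_gauss_transfer v hv, aux_gauss_moment2_vol hvpos, hvr]
  have Eabs3 : ∫ z, |z|^3 ∂(gaussianReal 0 v) = 2 * Real.sqrt (2/π) * σ^3 := by
    rw [aux_gauss_transfer v hv]; exact aux_gauss_moment3_vol hσ hvr
  have int_id : Integrable (fun z : ℝ => z) (gaussianReal 0 v) := by
    rw [aux_gauss_integrable_iff v hv]
    refine aux_gauss_integrable hvpos continuous_id zero_le_one zero_le_one (fun x => ?_)
    have := aux_le_one_add_cube (abs_nonneg x)
    simpa using this
  have int_sq : Integrable (fun z : ℝ => z^2) (gaussianReal 0 v) := by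
    rw [aux_gauss_integrable_iff v hv]
    refine aux_gauss_integrable hvpos (continuous_pow 2) zero_le_one zero_le_one (fun x => ?_)
    have h := aux_sq_le_one_add_cube (abs_nonneg x)
    rw [abs_of_nonneg (sq_nonneg x), one_mul, ← sq_abs]
    exact h
  have key : ∀ a : ℝ,
      |(∫ z, F (a - z) ∂(gaussianReal 0 v)) - F a| ≤ M₂/2 * σ^2 := by
    intro a
    set g : ℝ → ℝ := fun z => F (a - z) - F a + deriv F a * z with hg
    have hgb : ∀ z, |g z| ≤ M₂/2 * z^2 := by
      intro z
      have h := aux_taylor2_bound F M₂ hd1 hd2 hb2 a (a - z)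
      have e1 : F (a - z) - F a - deriv F a * ((a - z) - a) = g z := by
        rw [hg]; ring
      have e2 : ((a - z) - a)^2 = z^2 := by ring
      rw [e1, e2] at h
      exact h
    have hgc : Continuous g :=
      ((hd1.continuous.comp (continuous_const.sub continuous_id)).sub
        continuous_const).add (continuous_const.mul continuous_id)
    have hg_int : Integrable g (gaussianReal 0 v) := by
      rw [aux_gauss_integrable_iff v hv]
      refine aux_gauss_integrable hvpos hgc (A := M₂/2) (B := M₂/2)
        (by positivity) (by positivity) (fun x => ?_)
      have h1 := hgb x
      have h2 := aux_sq_le_one_add_cube (abs_nonneg x)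
      rw [sq_abs] at h2
      nlinarith [abs_nonneg (g x)]
    have hmul : Integrable (fun z : ℝ => deriv F a * z) (gaussianReal 0 v) :=
      int_id.const_mul (deriv F a)
    have hsub : Integrable (fun z : ℝ => g z - deriv F a * z) (gaussianReal 0 v) :=
      hg_int.sub hmul
    have hF_int : Integrable (fun z => F (a - z)) (gaussianReal 0 v) := by
      refine (hsub.add (integrable_const (F a))).congr (ae_of_all _ fun z => ?_)
      simp only [hg, Pi.add_apply]; ring
    have hsplit : (∫ z, F (a - z) ∂(gaussianReal 0 v))
        = (∫ z, g z ∂(gaussianReal 0 v))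
          - deriv F a * (∫ z, (z:ℝ) ∂(gaussianReal 0 v)) + F a := by
      have h1 : (∫ z, F (a - z) ∂(gaussianReal 0 v))
          = ∫ z, (g z - deriv F a * z + F a) ∂(gaussianReal 0 v) := by
        refine integral_congr_ae (ae_of_all _ fun z => ?_)
        rw [hg]; ring
      rw [h1, integral_add hsub (integrable_const _),
        integral_sub hg_int hmul, integral_const_mul, integral_const, probReal_univ]
      simp
    rw [hsplit, Ez]
    have hsimp : (∫ z, g z ∂(gaussianReal 0 v)) - deriv F a * 0 + F a - F a
        = ∫ z, g z ∂(gaussianReal 0 v) := by ring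
    rw [hsimp]
    calc |∫ z, g z ∂(gaussianReal 0 v)|
        ≤ ∫ z, |g z| ∂(gaussianReal 0 v) := by
          simpa [Real.norm_eq_abs] using
            norm_integral_le_integral_norm (μ := gaussianReal 0 v) g
      _ ≤ ∫ z, M₂/2 * z^2 ∂(gaussianReal 0 v) := by
          refine integral_mono hg_int.abs (int_sq.const_mul _) (fun z => hgb z)
      _ = M₂/2 * σ^2 := by rw [integral_const_mul, Ez2]
  have habs3_nonneg : 0 ≤ ∫ z, |z|^3 ∂(gaussianReal 0 v) :=
    integral_nonneg (fun z => by positivity)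
  refine ⟨fun a => ?_, Eabs3, fun a => ?_⟩
  · have h1 := key a
    have h2 : 0 ≤ M₃ / 6 * ∫ z, |z|^3 ∂(gaussianReal 0 v) :=
      mul_nonneg (by linarith) habs3_nonneg
    linarith
  · have h1 := key a
    have h2 : 0 ≤ Real.sqrt (2/π) * M₃ / 3 * σ^3 :=
      mul_nonneg (div_nonneg (mul_nonneg (Real.sqrt_nonneg _) hM3) (by norm_num))
        (pow_nonneg hσ.le 3)
    linarith

end
end

section
/- Let W and Z be real random variables on a probability space such that E[W² | Z] ≤ c almost surely for a constant c > 0, Z has a Lebesgue density bounded by f̄ < ∞, E[W⁴] < ∞, and E[Z²] < ∞. Then for every σ > 0 and every A > 0, E[ W² |Z| σ^{−3} exp(−Z²/(2σ²)) ] ≤ 2 c f̄ A²/σ³ + σ^{−3} √(E[W⁴]·E[Z²]) · exp(−A²/(2σ²)). -/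
open MeasureTheory ProbabilityTheory Real

noncomputable section

/-- Truncation bound: if `E[W² | Z] ≤ c` a.s., `Z` has a Lebesgue density bounded by `f̄`,
`E[W⁴] < ∞` and `E[Z²] < ∞`, then for all `σ > 0` and `A > 0`,
`E[W² |Z| σ⁻³ e^{−Z²/(2σ²)}] ≤ 2 c f̄ A²/σ³ + σ⁻³ √(E[W⁴]E[Z²]) e^{−A²/(2σ²)}`. -/
theorem truncation_gaussian_kernel_bound
    {Ω : Type*} [MeasurableSpace Ω] (P : Measure Ω) [IsProbabilityMeasure P]
    (W Z : Ω → ℝ) (hW : Measurable W) (hZ : Measurable Z)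
    (c : ℝ) (hc : 0 < c)
    (hcond : ∀ᵐ ω ∂P,
      (P[(fun ω' => W ω' ^ 2)|MeasurableSpace.comap Z inferInstance]) ω ≤ c)
    (fbar : ℝ) (f : ℝ → ℝ) (hf0 : ∀ x, 0 ≤ f x) (hfb : ∀ x, f x ≤ fbar)
    (hdens : Measure.map Z P = MeasureTheory.volume.withDensity (fun x => ENNReal.ofReal (f x)))
    (hW4 : Integrable (fun ω => W ω ^ 4) P)
    (hZ2 : Integrable (fun ω => Z ω ^ 2) P) :
    ∀ σ A : ℝ, 0 < σ → 0 < A →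
      ∫ ω, W ω ^ 2 * |Z ω| * σ⁻¹ ^ 3 * Real.exp (-(Z ω ^ 2) / (2 * σ ^ 2)) ∂P
        ≤ 2 * c * fbar * A ^ 2 / σ ^ 3
          + σ⁻¹ ^ 3 * Real.sqrt ((∫ ω, W ω ^ 4 ∂P) * ∫ ω, Z ω ^ 2 ∂P)
            * Real.exp (-(A ^ 2) / (2 * σ ^ 2)) := by
  intro σ A hσ hA
  have hfbar : 0 ≤ fbar := le_trans (hf0 0) (hfb 0)
  have hm : MeasurableSpace.comap Z inferInstance ≤ ‹MeasurableSpace Ω› := hZ.comap_le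
  set K : ℝ := σ⁻¹ ^ 3 with hK
  have hKpos : 0 < K := by positivity
  set g1 : ℝ → ℝ := fun z => if |z| ≤ A then |z| * K * Real.exp (-(z ^ 2) / (2 * σ ^ 2)) else 0
    with hg1
  set g2 : ℝ → ℝ := fun z => if |z| ≤ A then 0 else |z| * K * Real.exp (-(z ^ 2) / (2 * σ ^ 2))
    with hg2
  have hg1meas : Measurable g1 := by
    apply Measurable.ite (measurableSet_le measurable_abs measurable_const)
    · exact (measurable_abs.mul measurable_const).mul
        (((measurable_id.pow_const 2).neg.div_const _).exp)
    · exact measurable_const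
  have hg2meas : Measurable g2 := by
    apply Measurable.ite (measurableSet_le measurable_abs measurable_const) measurable_const
    exact (measurable_abs.mul measurable_const).mul
      (((measurable_id.pow_const 2).neg.div_const _).exp)
  have hg1nonneg : ∀ z, 0 ≤ g1 z := by
    intro z; rw [hg1]; dsimp only; split
    · positivity
    · exact le_refl 0
  have hg1bdd : ∀ z, g1 z ≤ K * A := by
    intro z; rw [hg1]; dsimp only; split
    · rename_i h
      calc |z| * K * Real.exp (-(z ^ 2) / (2 * σ ^ 2)) ≤ |z| * K * 1 := by
            apply mul_le_mul_of_nonneg_left _ (by positivity)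
            exact Real.exp_le_one_iff.mpr
              (div_nonpos_of_nonpos_of_nonneg (neg_nonpos.mpr (sq_nonneg z)) (by positivity))
        _ = |z| * K := by ring
        _ ≤ A * K := by exact mul_le_mul_of_nonneg_right h hKpos.le
        _ = K * A := by ring
    · positivity
  -- integrability of W^2 and W^2 |Z|
  have hW2 : Integrable (fun ω => W ω ^ 2) P := by
    refine Integrable.mono' (integrable_const (1 : ℝ) |>.add hW4) ((hW.pow_const 2).aestronglyMeasurable) ?_
    filter_upwards with ω
    simp only [Pi.add_apply]
    rw [Real.norm_of_nonneg (by positivity)]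
    nlinarith [sq_nonneg (W ω ^ 2 - 1)]
  have hWZ : Integrable (fun ω => W ω ^ 2 * |Z ω|) P := by
    refine Integrable.mono' (hW4.add hZ2) ((hW.pow_const 2).mul hZ.abs).aestronglyMeasurable ?_
    filter_upwards with ω
    simp only [Pi.add_apply]
    rw [Real.norm_of_nonneg (by positivity)]
    nlinarith [sq_nonneg (W ω ^ 2 - |Z ω|), sq_abs (Z ω)]
  -- the two pieces
  have hF1int : Integrable (fun ω => g1 (Z ω) * W ω ^ 2) P := by
    refine Integrable.mono' (hW2.const_mul (K * A)) ((hg1meas.comp hZ).mul (hW.pow_const 2)).aestronglyMeasurable ?_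
    filter_upwards with ω
    rw [Real.norm_of_nonneg (mul_nonneg (hg1nonneg _) (by positivity))]
    exact mul_le_mul_of_nonneg_right (hg1bdd _) (by positivity)
  have hg2le : ∀ ω, g2 (Z ω) * W ω ^ 2
      ≤ (K * Real.exp (-(A ^ 2) / (2 * σ ^ 2))) * (W ω ^ 2 * |Z ω|) := by
    intro ω
    rw [hg2]; dsimp only; split
    · have : (0:ℝ) ≤ (K * Real.exp (-(A ^ 2) / (2 * σ ^ 2))) * (W ω ^ 2 * |Z ω|) := by positivity
      simpa using this
    · rename_i h
      push_neg at h
      have hz2 : A ^ 2 ≤ Z ω ^ 2 := by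
        have := abs_nonneg (Z ω)
        nlinarith [sq_abs (Z ω)]
      have h2σ : (0:ℝ) < 2 * σ ^ 2 := by positivity
      have hexp : Real.exp (-(Z ω ^ 2) / (2 * σ ^ 2)) ≤ Real.exp (-(A ^ 2) / (2 * σ ^ 2)) :=
        Real.exp_le_exp.mpr ((div_le_div_iff_of_pos_right h2σ).mpr (by linarith))
      calc |Z ω| * K * Real.exp (-(Z ω ^ 2) / (2 * σ ^ 2)) * W ω ^ 2
          ≤ |Z ω| * K * Real.exp (-(A ^ 2) / (2 * σ ^ 2)) * W ω ^ 2 := by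
            have h1 : |Z ω| * K * Real.exp (-(Z ω ^ 2) / (2 * σ ^ 2))
                ≤ |Z ω| * K * Real.exp (-(A ^ 2) / (2 * σ ^ 2)) :=
              mul_le_mul_of_nonneg_left hexp (by positivity)
            exact mul_le_mul_of_nonneg_right h1 (by positivity)
        _ = (K * Real.exp (-(A ^ 2) / (2 * σ ^ 2))) * (W ω ^ 2 * |Z ω|) := by ring
  have hg2nonneg : ∀ z, 0 ≤ g2 z := by
    intro z; rw [hg2]; dsimp only; split
    · exact le_refl 0
    · positivity
  have hF2int : Integrable (fun ω => g2 (Z ω) * W ω ^ 2) P := by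
    refine Integrable.mono' (hWZ.const_mul (K * Real.exp (-(A ^ 2) / (2 * σ ^ 2))))
      ((hg2meas.comp hZ).mul (hW.pow_const 2)).aestronglyMeasurable ?_
    filter_upwards with ω
    rw [Real.norm_of_nonneg (mul_nonneg (hg2nonneg _) (by positivity))]
    exact hg2le ω
  -- splitting the integral
  have hsplit : ∫ ω, W ω ^ 2 * |Z ω| * σ⁻¹ ^ 3 * Real.exp (-(Z ω ^ 2) / (2 * σ ^ 2)) ∂P
      = (∫ ω, g1 (Z ω) * W ω ^ 2 ∂P) + ∫ ω, g2 (Z ω) * W ω ^ 2 ∂P := by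
    rw [← integral_add hF1int hF2int]
    apply integral_congr_ae
    filter_upwards with ω
    rw [hg1, hg2]; dsimp only
    split <;> ring
  rw [hsplit]
  -- Term 1
  have hYint : Integrable (P[(fun ω' => W ω' ^ 2)|MeasurableSpace.comap Z inferInstance]) P := integrable_condExp
  have hY0 : 0 ≤ᵐ[P] (P[(fun ω' => W ω' ^ 2)|MeasurableSpace.comap Z inferInstance]) :=
    condExp_nonneg (Filter.Eventually.of_forall fun ω => by positivity)
  have hg1Zsm : StronglyMeasurable[MeasurableSpace.comap Z inferInstance] (fun ω => g1 (Z ω)) := by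
    apply Measurable.stronglyMeasurable
    exact hg1meas.comp (Measurable.of_comap_le le_rfl)
  have htower : ∫ ω, g1 (Z ω) * W ω ^ 2 ∂P
      = ∫ ω, g1 (Z ω) * (P[(fun ω' => W ω' ^ 2)|MeasurableSpace.comap Z inferInstance]) ω ∂P := by
    have hmul := condExp_mul_of_stronglyMeasurable_left (μ := P) hg1Zsm hF1int hW2
    calc ∫ ω, g1 (Z ω) * W ω ^ 2 ∂P
        = ∫ ω, ((fun ω => g1 (Z ω)) * fun ω => W ω ^ 2) ω ∂P := rfl
      _ = ∫ ω, (P[((fun ω => g1 (Z ω)) * fun ω => W ω ^ 2)|MeasurableSpace.comap Z inferInstance]) ω ∂P :=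
            (integral_condExp hm).symm
      _ = ∫ ω, g1 (Z ω) * (P[(fun ω' => W ω' ^ 2)|MeasurableSpace.comap Z inferInstance]) ω ∂P := by
          refine integral_congr_ae ?_
          filter_upwards [hmul] with ω hω
          simpa using hω
  have hterm1 : ∫ ω, g1 (Z ω) * W ω ^ 2 ∂P ≤ c * ∫ ω, g1 (Z ω) ∂P := by
    rw [htower]
    have hrhsint : Integrable (fun ω => g1 (Z ω) * c) P := by
      refine Integrable.mono' (integrable_const (K * A * c))
        ((hg1meas.comp hZ).mul measurable_const).aestronglyMeasurable ?_
      filter_upwards with ω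
      rw [Real.norm_of_nonneg (mul_nonneg (hg1nonneg _) hc.le)]
      exact mul_le_mul_of_nonneg_right (hg1bdd _) hc.le
    have hlhsint : Integrable (fun ω => g1 (Z ω) * (P[(fun ω' => W ω' ^ 2)|MeasurableSpace.comap Z inferInstance]) ω) P := by
      have hmul := condExp_mul_of_stronglyMeasurable_left (μ := P) hg1Zsm hF1int hW2
      exact (integrable_condExp (f := fun ω => g1 (Z ω) * W ω ^ 2)).congr hmul
    calc ∫ ω, g1 (Z ω) * (P[(fun ω' => W ω' ^ 2)|MeasurableSpace.comap Z inferInstance]) ω ∂P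
        ≤ ∫ ω, g1 (Z ω) * c ∂P := by
          apply integral_mono_ae hlhsint hrhsint
          filter_upwards [hcond] with ω hω
          exact mul_le_mul_of_nonneg_left hω (hg1nonneg _)
      _ = c * ∫ ω, g1 (Z ω) ∂P := by rw [integral_mul_const]; ring
  -- bounding ∫ g1(Z)
  have hindint : Integrable ((Set.Icc (-A) A).indicator (fun _ => K * A)) (volume : Measure ℝ) := by
    rw [integrable_indicator_iff measurableSet_Icc]
    exact (integrableOn_const_iff).mpr (Or.inr measure_Icc_lt_top)
  have hg1vol : Integrable g1 (volume : Measure ℝ) := by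
    refine Integrable.mono' hindint hg1meas.aestronglyMeasurable ?_
    filter_upwards with z
    rw [Real.norm_of_nonneg (hg1nonneg z)]
    by_cases h : |z| ≤ A
    · have hz : z ∈ Set.Icc (-A) A := abs_le.mp h
      rw [Set.indicator_of_mem hz]
      exact hg1bdd z
    · have hz : z ∉ Set.Icc (-A) A := fun hmem => h (abs_le.mpr hmem)
      rw [Set.indicator_of_notMem hz]
      rw [hg1]; dsimp only; rw [if_neg h]
  have hg1ZleB : ∫ ω, g1 (Z ω) ∂P ≤ fbar * (K * A * (2 * A)) := by
    have hmap : ∫ ω, g1 (Z ω) ∂P = ∫ z, g1 z ∂(Measure.map Z P) :=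
      (integral_map hZ.aemeasurable hg1meas.aestronglyMeasurable).symm
    rw [hmap, hdens]
    have hle : (volume.withDensity fun x => ENNReal.ofReal (f x))
        ≤ (ENNReal.ofReal fbar) • (volume : Measure ℝ) := by
      refine Measure.le_iff.mpr fun s hs => ?_
      rw [withDensity_apply _ hs, Measure.smul_apply, smul_eq_mul]
      calc ∫⁻ x in s, ENNReal.ofReal (f x) ∂volume
          ≤ ∫⁻ _ in s, ENNReal.ofReal fbar ∂volume :=
            lintegral_mono fun x => ENNReal.ofReal_le_ofReal (hfb x)
        _ = ENNReal.ofReal fbar * volume s := by rw [setLIntegral_const]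
    have hint_smul : Integrable g1 ((ENNReal.ofReal fbar) • (volume : Measure ℝ)) :=
      hg1vol.smul_measure ENNReal.ofReal_ne_top
    calc ∫ z, g1 z ∂(volume.withDensity fun x => ENNReal.ofReal (f x))
        ≤ ∫ z, g1 z ∂((ENNReal.ofReal fbar) • (volume : Measure ℝ)) :=
          integral_mono_measure hle (Filter.Eventually.of_forall hg1nonneg) hint_smul
      _ = fbar * ∫ z, g1 z ∂(volume : Measure ℝ) := by
          rw [integral_smul_measure, ENNReal.toReal_ofReal hfbar, smul_eq_mul]
      _ ≤ fbar * (K * A * (2 * A)) := by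
          apply mul_le_mul_of_nonneg_left _ hfbar
          calc ∫ z, g1 z ∂(volume : Measure ℝ)
              ≤ ∫ z, (Set.Icc (-A) A).indicator (fun _ => K * A) z ∂(volume : Measure ℝ) := by
                apply integral_mono hg1vol hindint
                intro z
                by_cases h : |z| ≤ A
                · have hz : z ∈ Set.Icc (-A) A := abs_le.mp h
                  rw [Set.indicator_of_mem hz]
                  exact hg1bdd z
                · have hz : z ∉ Set.Icc (-A) A := fun hmem => h (abs_le.mpr hmem)
                  rw [Set.indicator_of_notMem hz]
                  rw [hg1]; dsimp only; rw [if_neg h]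
            _ = K * A * (2 * A) := by
                rw [integral_indicator_const _ measurableSet_Icc, Real.volume_real_Icc_of_le (by linarith), smul_eq_mul]
                rw [show A - -A = 2 * A by ring]
                ring
  -- Term 2
  have hterm2 : ∫ ω, g2 (Z ω) * W ω ^ 2 ∂P
      ≤ K * Real.exp (-(A ^ 2) / (2 * σ ^ 2)) * ∫ ω, W ω ^ 2 * |Z ω| ∂P := by
    calc ∫ ω, g2 (Z ω) * W ω ^ 2 ∂P
        ≤ ∫ ω, (K * Real.exp (-(A ^ 2) / (2 * σ ^ 2))) * (W ω ^ 2 * |Z ω|) ∂P :=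
          integral_mono hF2int (hWZ.const_mul _) hg2le
      _ = K * Real.exp (-(A ^ 2) / (2 * σ ^ 2)) * ∫ ω, W ω ^ 2 * |Z ω| ∂P :=
          integral_const_mul _ _
  -- Cauchy-Schwarz
  have hCS : ∫ ω, W ω ^ 2 * |Z ω| ∂P
      ≤ Real.sqrt ((∫ ω, W ω ^ 4 ∂P) * ∫ ω, Z ω ^ 2 ∂P) := by
    have hpq : Real.HolderConjugate 2 2 := Real.holderConjugate_iff.mpr ⟨one_lt_two, by norm_num⟩
    have hWmem : MemLp (fun ω => W ω ^ 2) (ENNReal.ofReal 2) P := by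
      rw [show ENNReal.ofReal 2 = 2 by norm_num]
      rw [memLp_two_iff_integrable_sq ((hW.pow_const 2).aestronglyMeasurable)]
      apply hW4.congr
      filter_upwards with ω
      ring
    have hZmem : MemLp (fun ω => |Z ω|) (ENNReal.ofReal 2) P := by
      rw [show ENNReal.ofReal 2 = 2 by norm_num]
      rw [memLp_two_iff_integrable_sq (hZ.abs.aestronglyMeasurable)]
      apply hZ2.congr
      filter_upwards with ω
      rw [sq_abs]
    have h := integral_mul_le_Lp_mul_Lq_of_nonneg hpq
      (Filter.Eventually.of_forall fun ω => by positivity : 0 ≤ᵐ[P] fun ω => W ω ^ 2)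
      (Filter.Eventually.of_forall fun ω => abs_nonneg _) hWmem hZmem
    have h4 : ∫ ω, (W ω ^ 2) ^ (2:ℝ) ∂P = ∫ ω, W ω ^ 4 ∂P := by
      apply integral_congr_ae; filter_upwards with ω
      rw [show ((2:ℝ) = ((2:ℕ):ℝ)) by norm_num, Real.rpow_natCast]
      all_goals ring
    have h2 : ∫ ω, |Z ω| ^ (2:ℝ) ∂P = ∫ ω, Z ω ^ 2 ∂P := by
      apply integral_congr_ae; filter_upwards with ω
      rw [show ((2:ℝ) = ((2:ℕ):ℝ)) by norm_num, Real.rpow_natCast]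
      all_goals rw [sq_abs]
    rw [h4, h2] at h
    refine h.trans ?_
    have hW4nn : 0 ≤ ∫ ω, W ω ^ 4 ∂P := integral_nonneg fun ω => by positivity
    have hZ2nn : 0 ≤ ∫ ω, Z ω ^ 2 ∂P := integral_nonneg fun ω => by positivity
    rw [Real.sqrt_eq_rpow, ← Real.mul_rpow hW4nn hZ2nn]
    all_goals norm_num
  -- putting things together
  have hterm1' : ∫ ω, g1 (Z ω) * W ω ^ 2 ∂P ≤ 2 * c * fbar * A ^ 2 / σ ^ 3 := by
    refine hterm1.trans ?_
    calc c * ∫ ω, g1 (Z ω) ∂P ≤ c * (fbar * (K * A * (2 * A))) :=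
          mul_le_mul_of_nonneg_left hg1ZleB hc.le
      _ = 2 * c * fbar * A ^ 2 / σ ^ 3 := by
          rw [hK]; field_simp
  have hterm2' : ∫ ω, g2 (Z ω) * W ω ^ 2 ∂P
      ≤ σ⁻¹ ^ 3 * Real.sqrt ((∫ ω, W ω ^ 4 ∂P) * ∫ ω, Z ω ^ 2 ∂P)
          * Real.exp (-(A ^ 2) / (2 * σ ^ 2)) := by
    refine hterm2.trans ?_
    rw [← hK, show K * Real.exp (-(A ^ 2) / (2 * σ ^ 2)) * ∫ ω, W ω ^ 2 * |Z ω| ∂P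
        = (Real.exp (-(A ^ 2) / (2 * σ ^ 2)) * K) * ∫ ω, W ω ^ 2 * |Z ω| ∂P by ring]
    rw [show σ⁻¹ ^ 3 * Real.sqrt ((∫ ω, W ω ^ 4 ∂P) * ∫ ω, Z ω ^ 2 ∂P)
        * Real.exp (-(A ^ 2) / (2 * σ ^ 2))
        = (Real.exp (-(A ^ 2) / (2 * σ ^ 2)) * σ⁻¹ ^ 3)
          * Real.sqrt ((∫ ω, W ω ^ 4 ∂P) * ∫ ω, Z ω ^ 2 ∂P) by ring]
    exact mul_le_mul_of_nonneg_left hCS (by positivity)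
  rw [← hK] at hterm2'
  linarith
end
end
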